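/- Let A be a Schur ring over the infinite dihedral group D∞ and let C be the basic set of A containing z. If C contains an element of the form z^i s for some i ∈ ℤ, then there exist integers i ≠ j such that both z^i s and z^j s belong to C. -/

import Mathlib

open scoped BigOperators

/-- A Schur ring over the group `G` with coefficients in the field `F`, presented by its
partition into finite nonempty basic sets. -/
structure SchurRing (F : Type) [Field F] [CharZero F] (G : Type) [Group G] [DecidableEq G] where
  /-- the basic sets -/
  parts : Set (Finset G)
  nonempty : ∀ C ∈ parts, C.Nonempty
  cover : ∀ g : G, ∃ C ∈ parts, g ∈ C
  eq_or_disjoint : ∀ C ∈ parts, ∀ D ∈ parts, C = D ∨ Disjoint C D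
  one_mem : ({1} : Finset G) ∈ parts
  inv_mem : ∀ C ∈ parts, C.image (·⁻¹) ∈ parts
  mul_mem : ∀ C ∈ parts, ∀ D ∈ parts, ∃ S : Finset (Finset G),
    (↑S : Set (Finset G)) ⊆ parts ∧ ∃ coef : Finset G → F,
      (∑ g ∈ C, MonoidAlgebra.single g (1 : F)) * (∑ g ∈ D, MonoidAlgebra.single g (1 : F))
        = ∑ E ∈ S, coef E • ∑ g ∈ E, MonoidAlgebra.single g (1 : F)

/-- A subset of `G` is an `A`-set if it is a union of basic sets of `A`. -/
def SchurRing.IsASet {F : Type} [Field F] [CharZero F] {G : Type} [Group G] [DecidableEq G]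
    (A : SchurRing F G) (X : Set G) : Prop :=
  ∃ 𝒮 : Set (Finset G), 𝒮 ⊆ A.parts ∧ X = ⋃ C ∈ 𝒮, (C : Set G)

/-- The infinite dihedral group, realized as `DihedralGroup 0`. -/
abbrev Dinf : Type := DihedralGroup 0

/-- The generator `z` of infinite order. -/
def zz : Dinf := DihedralGroup.r 1

/-- The reflection `s` of order two. -/
def ss : Dinf := DihedralGroup.sr 0

/-!
Suppose the basic set `C ∋ z` contains exactly one reflection `s_e`. As `s_e` is an involution,
`C* = C`, so `C = {s_e} ∪ {z^x : x ∈ P}` with `P = -P` and `1 ∈ P`. Since `C̄³ ∈ A`, its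
coefficients at `s_e` and at `z` agree. Counting factorizations `g = abd` with `a, b, d ∈ C` gives
`3|P| + 1` for `g = s_e` and `N + 3` for `g = z`, where `N` is the number of `(x, y, w) ∈ P³`
with `x + y + w = 1`. Rotating such triples cyclically has no fixed point, because `3x = 1` has no
solution in `ℤ` (nor in `ℤ/n` for `3 ∣ n`); hence `3 ∣ N`, which contradicts `N = 3|P| - 2`.
-/

open Finset

section SimpleQuantity

variable {F : Type} [Semiring F] {G : Type} [DecidableEq G]

variable (F) in
noncomputable def simpleQuantity (C : Finset G) : MonoidAlgebra F G :=
  ∑ g ∈ C, MonoidAlgebra.single g 1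

theorem coeff_simpleQuantity (C : Finset G) (g : G) :
    (simpleQuantity F C).coeff g = if g ∈ C then 1 else 0 := by
  simp [simpleQuantity, MonoidAlgebra.coeff_sum, Finsupp.finsetSum_apply,
    MonoidAlgebra.coeff_single, Finsupp.single_apply]

variable [Group G]

def tripleCount (C : Finset G) (g : G) : ℕ :=
  ∑ a ∈ C, ∑ b ∈ C, ∑ d ∈ C, if a * b * d = g then 1 else 0

theorem coeff_simpleQuantity_mul_mul (C : Finset G) (g : G) :
    (simpleQuantity F C * simpleQuantity F C * simpleQuantity F C).coeff g = tripleCount C g := by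
  have hexpand : simpleQuantity F C * simpleQuantity F C * simpleQuantity F C =
      ∑ a ∈ C, ∑ b ∈ C, ∑ d ∈ C, MonoidAlgebra.single (a * b * d) 1 := by
    simp_rw [simpleQuantity, sum_mul_sum, sum_mul, MonoidAlgebra.single_mul_single, one_mul]
    exact sum_congr rfl fun _ _ => sum_comm
  simp [hexpand, tripleCount, MonoidAlgebra.coeff_sum, Finsupp.finsetSum_apply,
    MonoidAlgebra.coeff_single, Finsupp.single_apply]

end SimpleQuantity

namespace SchurRing

variable {F : Type} [Field F] [CharZero F] {G : Type} [Group G] [DecidableEq G]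

noncomputable def toSubmodule (A : SchurRing F G) : Submodule F (MonoidAlgebra F G) :=
  Submodule.span F (simpleQuantity F '' A.parts)

variable {A : SchurRing F G}

theorem simpleQuantity_mem_toSubmodule {C : Finset G} (hC : C ∈ A.parts) :
    simpleQuantity F C ∈ A.toSubmodule :=
  Submodule.subset_span ⟨C, hC, rfl⟩

theorem mul_simpleQuantity_mem_toSubmodule {x : MonoidAlgebra F G} (hx : x ∈ A.toSubmodule)
    {D : Finset G} (hD : D ∈ A.parts) : x * simpleQuantity F D ∈ A.toSubmodule := by
  induction hx using Submodule.span_induction with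
  | mem y hy =>
    obtain ⟨C, hC, rfl⟩ := hy
    obtain ⟨S, hS, coef, hCD⟩ := A.mul_mem C hC D hD
    rw [simpleQuantity, simpleQuantity, hCD]
    exact Submodule.sum_mem _ fun E hE =>
      Submodule.smul_mem _ _ (simpleQuantity_mem_toSubmodule (hS hE))
  | zero => simp
  | add y z _ _ hy hz => rw [add_mul]; exact Submodule.add_mem _ hy hz
  | smul c y _ hy => rw [smul_mul_assoc]; exact Submodule.smul_mem _ c hy

theorem coeff_eq_of_mem_toSubmodule {x : MonoidAlgebra F G} (hx : x ∈ A.toSubmodule)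
    {C : Finset G} (hC : C ∈ A.parts) {g g' : G} (hg : g ∈ C) (hg' : g' ∈ C) :
    x.coeff g = x.coeff g' := by
  induction hx using Submodule.span_induction with
  | mem y hy =>
    obtain ⟨E, hE, rfl⟩ := hy
    rw [coeff_simpleQuantity, coeff_simpleQuantity]
    rcases A.eq_or_disjoint E hE C hC with rfl | hEC
    · simp [hg, hg']
    · simp [disjoint_right.mp hEC hg, disjoint_right.mp hEC hg']
  | zero => simp
  | add y z _ _ hy hz => simp [hy, hz]
  | smul c y _ hy => simp [hy]

theorem tripleCount_eq_of_mem {C : Finset G} (hC : C ∈ A.parts) {g g' : G} (hg : g ∈ C)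
    (hg' : g' ∈ C) : tripleCount C g = tripleCount C g' := by
  have hcube := mul_simpleQuantity_mem_toSubmodule
    (mul_simpleQuantity_mem_toSubmodule (simpleQuantity_mem_toSubmodule hC) hC) hC
  have hcoeff := coeff_eq_of_mem_toSubmodule hcube hC hg hg'
  rwa [coeff_simpleQuantity_mul_mul, coeff_simpleQuantity_mul_mul, Nat.cast_inj] at hcoeff

theorem inv_mem_of_inv_mem {C : Finset G} (hC : C ∈ A.parts) {g : G} (hg : g ∈ C)
    (hg' : g⁻¹ ∈ C) ⦃h : G⦄ (hh : h ∈ C) : h⁻¹ ∈ C := by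
  rcases A.eq_or_disjoint _ (A.inv_mem C hC) C hC with hCinv | hdisj
  · exact hCinv ▸ mem_image_of_mem _ hh
  · exact absurd hg (disjoint_left.mp hdisj (by simpa using mem_image_of_mem (·⁻¹) hg'))

end SchurRing

theorem three_dvd_card_add_add_eq {M : Type} [AddCommMonoid M] [DecidableEq M] (P : Finset M)
    {c : M} (hc : ∀ x, x + x + x ≠ c) :
    3 ∣ #{t ∈ P ×ˢ P ×ˢ P | t.1 + t.2.1 + t.2.2 = c} := by
  set S := {t ∈ P ×ˢ P ×ˢ P | t.1 + t.2.1 + t.2.2 = c}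
  let rotate : Equiv.Perm S :=
    ((Equiv.prodComm M (M × M)).trans (Equiv.prodAssoc M M M)).subtypeEquiv fun ⟨x, y, w⟩ => by
      simp only [S, mem_filter, mem_product, Equiv.trans_apply, Equiv.prodComm_apply, Prod.swap,
        Equiv.prodAssoc_apply, show y + w + x = x + y + w by abel]
      tauto
  have hrotate : rotate ^ 3 ^ 1 = 1 := by
    ext t <;> rfl
  have : Fact (Nat.Prime 3) := ⟨Nat.prime_three⟩
  by_contra h
  obtain ⟨⟨⟨x, y, w⟩, ht⟩, hfix⟩ :=
    Equiv.Perm.exists_fixed_point_of_prime (by rwa [Fintype.card_coe]) hrotate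
  obtain ⟨rfl, rfl, -⟩ : y = x ∧ w = y ∧ x = w := by simpa [rotate] using hfix
  exact hc w (mem_filter.mp ht).2

theorem ZMod.add_add_self_ne_one {n : ℕ} (hn : 3 ∣ n) (x : ZMod n) : x + x + x ≠ 1 := by
  intro h
  have h3 := congrArg (ZMod.castHom hn (ZMod 3)) h
  rw [map_add, map_add, map_one] at h3
  generalize ZMod.castHom hn (ZMod 3) x = y at h3
  revert y
  decide

namespace DihedralGroup

variable {n : ℕ}

theorem tripleCount_insert_sr_image_r_sr (P : Finset (ZMod n)) (e : ZMod n)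
    (hsym : ∀ x ∈ P, -x ∈ P) :
    tripleCount (insert (sr e) (P.image r)) (sr e) = 3 * #P + 1 := by
  have hnot : sr e ∉ P.image r := by simp
  simp only [tripleCount, sum_insert hnot, sum_image fun x _ y _ h => r.inj h, r_mul_r, r_mul_sr,
    sr_mul_r, sr_mul_sr, reduceCtorEq, if_false, sum_const_zero, sr.injEq, add_zero, zero_add]
  simp +contextual [add_assoc, add_eq_zero_iff_neg_eq, sub_add_eq_add_sub, sub_eq_iff_eq_add,
    add_right_inj, hsym]
  ring

theorem tripleCount_insert_sr_image_r_r_one (P : Finset (ZMod n)) (e : ZMod n)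
    (hsym : ∀ x ∈ P, -x ∈ P) (h1 : 1 ∈ P) :
    tripleCount (insert (sr e) (P.image r)) (r 1) =
      #{t ∈ P ×ˢ P ×ˢ P | t.1 + t.2.1 + t.2.2 = 1} + 3 := by
  have hnot : sr e ∉ P.image r := by simp
  simp only [tripleCount, sum_insert hnot, sum_image fun x _ y _ h => r.inj h, r_mul_r, r_mul_sr,
    sr_mul_r, sr_mul_sr, reduceCtorEq, if_false, sum_const_zero, r.injEq, add_zero, zero_add,
    card_filter, sum_product]
  simp [neg_eq_iff_eq_neg, sum_add_distrib, sum_ite_eq', h1, hsym 1 h1]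
  ring

theorem exists_ne_sr_mem (hn : 3 ∣ n) {F : Type} [Field F] [CharZero F]
    {A : SchurRing F (DihedralGroup n)} {C : Finset (DihedralGroup n)} (hC : C ∈ A.parts)
    (h1 : r 1 ∈ C) {e : ZMod n} (he : sr e ∈ C) : ∃ e', e' ≠ e ∧ sr e' ∈ C := by
  by_contra! huniq
  set P := C.preimage r fun _ _ _ _ h => r.inj h
  have hC_eq : C = insert (sr e) (P.image r) := by
    ext (x | x)
    · simp only [mem_insert, reduceCtorEq, false_or, mem_image, r.injEq, exists_eq_right]
      exact mem_preimage.symm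
    · by_cases hx : x = e
      · simp [hx, he]
      · simp [hx, huniq x hx]
  have hinv := A.inv_mem_of_inv_mem hC he (by rwa [inv_sr])
  have hsym : ∀ x ∈ P, -x ∈ P := fun x hx =>
    mem_preimage.mpr (by simpa using hinv (mem_preimage.mp hx))
  have h1P : 1 ∈ P := mem_preimage.mpr h1
  have hcount := A.tripleCount_eq_of_mem hC h1 he
  rw [hC_eq, tripleCount_insert_sr_image_r_r_one P e hsym h1P,
    tripleCount_insert_sr_image_r_sr P e hsym] at hcount
  have := three_dvd_card_add_add_eq P (ZMod.add_add_self_ne_one hn)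
  omega

end DihedralGroup

theorem zz_zpow_mul_ss (i : ℤ) : zz ^ i * ss = DihedralGroup.sr (-(Int.cast i : ZMod 0)) := by
  simp [zz, ss, DihedralGroup.r_mul_sr]

/-- If the basic set containing `z` contains an element of the form `z^i s`, then it contains
two such elements `z^i s`, `z^j s` with `i ≠ j`. -/
theorem stmt_1 (F : Type) [Field F] [CharZero F] (A : SchurRing F Dinf)
    (C : Finset Dinf) (hC : C ∈ A.parts) (hzC : zz ∈ C)
    (h : ∃ i : ℤ, zz ^ i * ss ∈ C) :
    ∃ i j : ℤ, i ≠ j ∧ zz ^ i * ss ∈ C ∧ zz ^ j * ss ∈ C := by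
  obtain ⟨i, hi⟩ := h
  rw [zz_zpow_mul_ss] at hi
  obtain ⟨e, hne, he⟩ := DihedralGroup.exists_ne_sr_mem (dvd_zero 3) hC hzC hi
  obtain ⟨k, rfl⟩ := ZMod.intCast_surjective e
  refine ⟨-k, i, ?_, by rwa [zz_zpow_mul_ss, Int.cast_neg, neg_neg], by rwa [zz_zpow_mul_ss]⟩
  rintro rfl
  simp at hne
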